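/- arXiv:2512.00286 — 3 statements merged into one kernel-verified Lean document; each statement's English description precedes it below -/
import Mathlib

section
/- Let (H, B) be a Rota–Baxter Hopf algebra of weight −1 and define B̃ : H → H by B̃(x) = x₁ B(S(x₂)). Then for all x ∈ H the following identities hold: B̃(B(x)) = B(S(B̃(S(x)))) and B(B̃(x)) = B̃(S(B(S(x)))). -/
open TensorProduct LinearMap

noncomputable section

universe u

variable {K H : Type u} [Field K] [CharZero K] [Ring H] [HopfAlgebra K H]

/-- The antipode of `H` as a `K`-linear map. -/
def aS (K H : Type u) [Field K] [Ring H] [HopfAlgebra K H] : H →ₗ[K] H :=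
  HopfAlgebra.antipode K

/-- Convolution-type composite: `conv f g x = f x₁ * g x₂` in Sweedler notation,
where the source may be any coalgebra `C`. -/
def conv {C : Type u} [AddCommGroup C] [Module K C] [Coalgebra K C]
    (f g : C →ₗ[K] H) : C →ₗ[K] H :=
  LinearMap.mul' K H ∘ₗ TensorProduct.map f g ∘ₗ Coalgebra.comul

/-- `wrap f g h (a ⊗ₜ c) = f a₁ * (g c * h a₂)` in Sweedler notation. -/
def wrap {C : Type u} [AddCommGroup C] [Module K C] [Coalgebra K C]
    (f : C →ₗ[K] H) (g : H →ₗ[K] H) (h : C →ₗ[K] H) : C ⊗[K] H →ₗ[K] H :=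
  LinearMap.mul' K H ∘ₗ
    TensorProduct.map f
      (LinearMap.mul' K H ∘ₗ TensorProduct.map g h ∘ₗ (TensorProduct.comm K C H).toLinearMap) ∘ₗ
    (TensorProduct.assoc K C C H).toLinearMap ∘ₗ
    TensorProduct.map Coalgebra.comul LinearMap.id

/-- The descendent product: `mulB B (x ⊗ₜ y) = B x₁ * (y * (S (B x₂) * x₃))`,
i.e. `x *_B y = B(x₁) y S(B(x₂)) x₃` in Sweedler notation. -/
def mulB (B : H →ₗ[K] H) : H ⊗[K] H →ₗ[K] H :=
  wrap B LinearMap.id (conv (aS K H ∘ₗ B) LinearMap.id)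

/-- `Bt B x = x₁ * B (S x₂)`, i.e. the operator `B̃`. -/
def Bt (B : H →ₗ[K] H) : H →ₗ[K] H := conv LinearMap.id (B ∘ₗ aS K H)

/-- `SB B x = S(B x₁) * (S x₂ * B x₃)`, the antipode `S_B` of the descendent Hopf algebra. -/
def SB (B : H →ₗ[K] H) : H →ₗ[K] H := conv (aS K H ∘ₗ B) (conv (aS K H) B)

/-- `H` is cocommutative. -/
def IsCocomm (K H : Type u) [Field K] [Ring H] [HopfAlgebra K H] : Prop :=
  ∀ x : H, (TensorProduct.comm K H H) (Coalgebra.comul x) = Coalgebra.comul x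

/-- `B` is a Rota–Baxter operator of weight `-1` on `H`: it is a coalgebra map and
`B x * B y = B (B(x₁) y S(B(x₂)) x₃)` in Sweedler notation. -/
def IsRotaBaxter (B : H →ₗ[K] H) : Prop :=
  (Coalgebra.comul ∘ₗ B = TensorProduct.map B B ∘ₗ Coalgebra.comul) ∧
  (Coalgebra.counit ∘ₗ B = Coalgebra.counit) ∧
  ∀ x y : H, B x * B y = B (mulB B (x ⊗ₜ[K] y))


/-! In the convolution algebra `(End H, *)`, `(f * g) x = f x₁ * g x₂`, a coalgebra map `B` has
convolution inverse `S ∘ B`. Cocommutativity makes the antipode `S` an involutive coalgebra map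
and turns the Rota–Baxter axiom into `B * (B ∘ u) = B ∘ (B * u * (S ∘ B) * id)` for every
linear `u`. With `T := B̃ ∘ S = S * B`, the first identity becomes
`B̃ ∘ B = B ∘ ((S ∘ B) * id) = B ∘ S ∘ T` (take `u = S ∘ B`) and the second becomes
`B ∘ T = (S ∘ B) * (B ∘ B) = T ∘ B` (take `u = T`). -/

open WithConv HopfAlgebra

lemma LinearMap.map_convOne_convOne_comp_comul {R C A : Type*} [CommSemiring R]
    [AddCommMonoid C] [Module R C] [Coalgebra R C] [Semiring A] [Algebra R A] :
    map (1 : WithConv (C →ₗ[R] A)).ofConv (1 : WithConv (C →ₗ[R] A)).ofConv ∘ₗ Coalgebra.comul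
      = (1 : WithConv (C →ₗ[R] A ⊗[R] A)).ofConv := by
  have h : map (1 : WithConv (C →ₗ[R] A)).ofConv (1 : WithConv (C →ₗ[R] A)).ofConv
      = map (1 : WithConv (C →ₗ[R] A)).ofConv (Algebra.linearMap R A) ∘ₗ
          lTensor C Coalgebra.counit := by
    rw [map_comp_lTensor]; rfl
  ext x
  rw [comp_apply, h, comp_apply, Coalgebra.lTensor_counit_comul]
  simp

namespace HopfAlgebra

variable {R A : Type*} [CommSemiring R] [Semiring A] [HopfAlgebra R A]

lemma antipode_comp_convMul {C : Type*} [AddCommMonoid C] [Module R C] [Coalgebra R C]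
    [Coalgebra.IsCocomm R C] (f g : WithConv (C →ₗ[R] A)) :
    antipode R ∘ₗ (f * g).ofConv
      = (toConv (antipode R ∘ₗ g.ofConv) * toConv (antipode R ∘ₗ f.ofConv)).ofConv := by
  ext c
  rw [comp_apply, convMul_apply, convMul_apply]
  conv_rhs => rw [← Coalgebra.comm_comul R c]
  induction Coalgebra.comul (R := R) c using TensorProduct.induction_on with
  | zero => simp
  | tmul a b => simp [antipode_mul_antidistrib]
  | add s t hs ht => simp only [map_add, hs, ht]

variable [Coalgebra.IsCocomm R A]

lemma antipode_comp_antipode : antipode R ∘ₗ antipode R = (LinearMap.id : A →ₗ[R] A) := by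
  have left_inv : toConv (antipode R ∘ₗ antipode R) * toConv (antipode R)
      = (1 : WithConv (A →ₗ[R] A)) := by
    have := antipode_comp_convMul (toConv LinearMap.id) (toConv (antipode R (A := A)))
    rw [id_mul_antipode, ofConv_toConv, ofConv_toConv, comp_id] at this
    apply ofConv_injective
    rw [← this]
    ext; simp [Algebra.algebraMap_eq_smul_one]
  calc antipode R ∘ₗ antipode R
      = (toConv (antipode R ∘ₗ antipode R) * (toConv (antipode R) * toConv LinearMap.id) :
          WithConv (A →ₗ[R] A)).ofConv := by
        rw [antipode_mul_id, mul_one]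
    _ = LinearMap.id := by rw [← mul_assoc, left_inv, one_mul]

/- `δ ∘ S` is a right convolution inverse of `δ` (`comul_right_inv`), and `(S ⊗ S) ∘ δ` is
a left one because `δ` is a coalgebra map when `A` is cocommutative. -/
lemma comul_comp_antipode :
    Coalgebra.comul ∘ₗ antipode R
      = map (antipode R) (antipode R) ∘ₗ Coalgebra.comul (R := R) (A := A) := by
  have left_inv : toConv (map (antipode R) (antipode R) ∘ₗ Coalgebra.comul) *
      toConv (Coalgebra.comul (R := R) (A := A)) = 1 := by
    have := convMul_comp_coalgHom_distrib (toConv (map (antipode R) (antipode R)))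
      (toConv (map LinearMap.id LinearMap.id)) (Coalgebra.comulCoalgHom R A)
    rw [map_convMul_map, antipode_mul_id, map_id] at this
    exact ofConv_injective (this.symm.trans map_convOne_convOne_comp_comul)
  exact congrArg ofConv (left_inv_eq_right_inv left_inv comul_right_inv).symm

variable (R A) in
def antipodeCoalgHom : A →ₗc[R] A where
  __ := antipode R
  counit_comp := counit_comp_antipode
  map_comp_comul := comul_comp_antipode.symm

lemma coe_antipodeCoalgHom : (antipodeCoalgHom R A).toLinearMap = antipode R := rfl

end HopfAlgebra

section RotaBaxter

variable {k A : Type u} [Field k] [Ring A] [HopfAlgebra k A]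

lemma wrap_comp_comul [Coalgebra.IsCocomm k A] (f g h : A →ₗ[k] A) :
    wrap f g h ∘ₗ Coalgebra.comul = (toConv f * toConv g * toConv h).ofConv := by
  calc wrap f g h ∘ₗ Coalgebra.comul
      = mul' k A
          ∘ₗ map f (mul' k A ∘ₗ map g h ∘ₗ (TensorProduct.comm k A A).toLinearMap)
          ∘ₗ ((TensorProduct.assoc k A A A).toLinearMap ∘ₗ rTensor A Coalgebra.comul
            ∘ₗ Coalgebra.comul) := rfl
    _ = mul' k A ∘ₗ map f (mul' k A ∘ₗ map g h ∘ₗ (TensorProduct.comm k A A).toLinearMap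
          ∘ₗ Coalgebra.comul) ∘ₗ Coalgebra.comul := by
        rw [Coalgebra.coassoc, ← comp_assoc Coalgebra.comul (lTensor A Coalgebra.comul) (map f _),
          map_comp_lTensor]
        rfl
    _ = (toConv f * (toConv g * toConv h)).ofConv := by
        rw [Coalgebra.comm_comp_comul]; rfl
    _ = _ := by rw [mul_assoc]

variable {B : A →ₗ[k] A}

def IsRotaBaxter.toCoalgHom (hB : IsRotaBaxter B) : A →ₗc[k] A where
  __ := B
  counit_comp := hB.2.1
  map_comp_comul := hB.1.symm

lemma IsRotaBaxter.coe_toCoalgHom (hB : IsRotaBaxter B) : hB.toCoalgHom.toLinearMap = B := rfl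

lemma IsRotaBaxter.mul_antipode_comp (hB : IsRotaBaxter B) :
    toConv B * toConv (antipode k ∘ₗ B) = 1 := by
  have := convMul_comp_coalgHom_distrib (toConv LinearMap.id) (toConv (antipode k)) hB.toCoalgHom
  rw [id_mul_antipode, convOne_comp_coalgHom, hB.coe_toCoalgHom] at this
  exact ofConv_injective this.symm

lemma IsRotaBaxter.antipode_comp_mul (hB : IsRotaBaxter B) :
    toConv (antipode k ∘ₗ B) * toConv B = 1 := by
  have := convMul_comp_coalgHom_distrib (toConv (antipode k)) (toConv LinearMap.id) hB.toCoalgHom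
  rw [antipode_mul_id, convOne_comp_coalgHom, hB.coe_toCoalgHom] at this
  exact ofConv_injective this.symm

variable [Coalgebra.IsCocomm k A]

lemma IsRotaBaxter.mul_comp (hB : IsRotaBaxter B) (u : A →ₗ[k] A) :
    toConv B * toConv (B ∘ₗ u) = toConv (B ∘ₗ
      (toConv B * toConv u * toConv (antipode k ∘ₗ B) * toConv LinearMap.id).ofConv) := by
  have hmul : mul' k A ∘ₗ map B B = B ∘ₗ mulB B :=
    TensorProduct.ext' fun x y => by simpa using hB.2.2 x y
  have hwrap : mulB B ∘ₗ lTensor A u = wrap B u (conv (aS k A ∘ₗ B) LinearMap.id) :=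
    TensorProduct.ext' fun x y => by
      simp only [mulB, wrap, comp_apply, lTensor_tmul, map_tmul, id_apply]
      induction Coalgebra.comul (R := k) x using TensorProduct.induction_on with
      | zero => simp
      | tmul a b => simp
      | add s t hs ht => simp only [add_tmul, map_add, hs, ht]
  calc toConv B * toConv (B ∘ₗ u)
      = toConv ((mul' k A ∘ₗ map B B) ∘ₗ lTensor A u ∘ₗ Coalgebra.comul) := by
        rw [comp_assoc, ← comp_assoc _ (lTensor A u), map_comp_lTensor]; rfl
    _ = toConv (B ∘ₗ wrap B u (conv (aS k A ∘ₗ B) LinearMap.id)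
          ∘ₗ Coalgebra.comul) := by
        rw [hmul, comp_assoc, ← comp_assoc _ (lTensor A u), hwrap]
    _ = _ := by rw [wrap_comp_comul, mul_assoc _ (toConv (antipode k ∘ₗ B))]; rfl

lemma Bt_comp_antipode : Bt B ∘ₗ antipode k = (toConv (antipode k) * toConv B).ofConv := by
  have := convMul_comp_coalgHom_distrib (toConv LinearMap.id) (toConv (B ∘ₗ antipode k))
    (antipodeCoalgHom k A)
  rw [coe_antipodeCoalgHom, ofConv_toConv, ofConv_toConv, id_comp, comp_assoc,
    antipode_comp_antipode, comp_id] at this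
  exact this

lemma antipode_comp_antipode_mul :
    antipode k ∘ₗ (toConv (antipode k) * toConv B).ofConv
      = (toConv (antipode k ∘ₗ B) * toConv LinearMap.id).ofConv := by
  rw [antipode_comp_convMul, ofConv_toConv, ofConv_toConv, antipode_comp_antipode]

lemma IsRotaBaxter.Bt_comp (hB : IsRotaBaxter B) :
    Bt B ∘ₗ B = B ∘ₗ (toConv (antipode k ∘ₗ B) * toConv LinearMap.id).ofConv := by
  have := convMul_comp_coalgHom_distrib (toConv LinearMap.id) (toConv (B ∘ₗ antipode k))
    hB.toCoalgHom
  rw [ofConv_toConv, ofConv_toConv, hB.coe_toCoalgHom, id_comp, comp_assoc,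
    hB.mul_comp, mul_assoc, hB.mul_antipode_comp, one_mul] at this
  exact this

lemma IsRotaBaxter.comp_antipode_mul (hB : IsRotaBaxter B) :
    B ∘ₗ (toConv (antipode k) * toConv B).ofConv
      = (toConv (antipode k) * toConv B).ofConv ∘ₗ B := by
  have h := hB.mul_comp (toConv (antipode k) * toConv B).ofConv
  rw [toConv_ofConv, ← mul_assoc, mul_assoc _ (toConv B), hB.mul_antipode_comp, mul_one,
    mul_assoc, antipode_mul_id, mul_one, ofConv_toConv] at h
  have h' : toConv (B ∘ₗ (toConv (antipode k) * toConv B).ofConv)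
      = toConv (antipode k ∘ₗ B) * toConv (B ∘ₗ B) := by
    rw [← h, ← mul_assoc, hB.antipode_comp_mul, one_mul]
  rw [← hB.coe_toCoalgHom, convMul_comp_coalgHom_distrib, hB.coe_toCoalgHom]
  exact congrArg ofConv h'

end RotaBaxter

/-- `B̃(B(x)) = B(S(B̃(S(x))))` and `B(B̃(x)) = B̃(S(B(S(x))))`. -/
theorem stmt5 (B : H →ₗ[K] H) (hcc : IsCocomm K H) (hB : IsRotaBaxter B) :
    ∀ x : H, Bt B (B x) = B (aS K H (Bt B (aS K H x))) ∧ B (Bt B x) = Bt B (aS K H (B (aS K H x))) := by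
  have : Coalgebra.IsCocomm K H := ⟨LinearMap.ext hcc⟩
  have hT (y : H) : Bt B (aS K H y) = (toConv (antipode K) * toConv B).ofConv y :=
    LinearMap.congr_fun Bt_comp_antipode y
  intro x
  constructor
  · calc Bt B (B x) = B ((toConv (antipode K ∘ₗ B) * toConv LinearMap.id).ofConv x) :=
          LinearMap.congr_fun hB.Bt_comp x
      _ = B (aS K H (Bt B (aS K H x))) := by
          rw [hT, ← LinearMap.congr_fun antipode_comp_antipode_mul x]; rfl
  · calc B (Bt B x) = B ((toConv (antipode K) * toConv B).ofConv (aS K H x)) := by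
          rw [← hT, aS, ← comp_apply (antipode K), antipode_comp_antipode, id_apply]
      _ = Bt B (aS K H (B (aS K H x))) := by
          rw [hT, ← comp_apply B, hB.comp_antipode_mul]; rfl

end
end

section
/- Let (H, B) be a Rota–Baxter Hopf algebra of weight −1. Then the image Im B = {B(x) : x ∈ H} is a Hopf subalgebra of H: it contains 1, it is closed under multiplication (for all x, y ∈ H there exists z ∈ H with B(x)B(y) = B(z)), it is closed under the antipode (for all x ∈ H there exists z ∈ H with S(B(x)) = B(z)), and the comultiplication maps it into Im B ⊗ Im B (Δ(B(x)) = B(x₁) ⊗ B(x₂) ∈ Im B ⊗ Im B). -/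
/-!
Closure under `1`, products and `Δ` is immediate: `B` is a coalgebra map, `B x * B y = B (x *_B y)`,
and `B 1` is a group-like idempotent, hence `1`. For the antipode, work in the convolution algebra
`Hom(H, H)`. As `B` is a coalgebra map, `S ∘ B` is a two-sided convolution inverse of `B`. The
Rota–Baxter identity turns `B * (B ∘ k)` into `B ∘ (x ↦ x₁ *_B k x₂)`, and by cocommutativity
`x₁ *_B k x₂ = (B * k * (S ∘ B) * id) x`. For `k = S_B = (S ∘ B) * S * B` this collapses to
`S * id = ε`, and `B ∘ ε = ε`; so `B ∘ S_B` is a right inverse of `B`, whence `S ∘ B = B ∘ S_B`.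
-/

open TensorProduct LinearMap

noncomputable section

universe u

variable {K H : Type u} [Field K] [CharZero K] [Ring H] [HopfAlgebra K H]

section

omit [CharZero K]

open WithConv

lemma toConv_conv {C : Type u} [AddCommGroup C] [Module K C] [Coalgebra K C] (f g : C →ₗ[K] H) :
    toConv (conv f g) = toConv f * toConv g := rfl

lemma wrap_id_comp_lTensor_comp_comul (hcc : IsCocomm K H) (f k h : H →ₗ[K] H) :
    wrap f LinearMap.id h ∘ₗ k.lTensor H ∘ₗ Coalgebra.comul = conv f (conv k h) := by
  have hcomm : (TensorProduct.comm K H H).toLinearMap ∘ₗ Coalgebra.comul = Coalgebra.comul :=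
    LinearMap.ext hcc
  let Φ : H ⊗[K] (H ⊗[K] H) →ₗ[K] H :=
    mul' K H ∘ₗ map f (mul' K H ∘ₗ map k h ∘ₗ (TensorProduct.comm K H H).toLinearMap)
  have hwrap : wrap f LinearMap.id h ∘ₗ k.lTensor H =
      Φ ∘ₗ (TensorProduct.assoc K H H H).toLinearMap ∘ₗ Coalgebra.comul.rTensor H := by
    refine TensorProduct.ext' fun x y => ?_
    simp only [wrap, LinearMap.comp_apply, LinearMap.lTensor_tmul, LinearMap.rTensor_tmul,
      map_tmul, LinearMap.id_apply, LinearEquiv.coe_coe]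
    induction Coalgebra.comul (R := K) x using TensorProduct.induction_on with
    | zero => simp
    | tmul a b => simp [Φ]
    | add p q hp hq => simp only [TensorProduct.add_tmul, map_add, hp, hq]
  calc wrap f LinearMap.id h ∘ₗ k.lTensor H ∘ₗ Coalgebra.comul
      = Φ ∘ₗ (TensorProduct.assoc K H H H).toLinearMap ∘ₗ Coalgebra.comul.rTensor H ∘ₗ
          Coalgebra.comul := by
        rw [← LinearMap.comp_assoc, hwrap]; rfl
    _ = Φ ∘ₗ Coalgebra.comul.lTensor H ∘ₗ Coalgebra.comul := by rw [Coalgebra.coassoc]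
    _ = conv f (conv k h) := by
        rw [← LinearMap.comp_assoc, LinearMap.comp_assoc _ (map f _), map_comp_lTensor]
        simp only [LinearMap.comp_assoc, hcomm]
        rfl

namespace IsRotaBaxter

variable {B : H →ₗ[K] H} (hB : IsRotaBaxter B)
include hB

def toCoalgHom_s8 : H →ₗc[K] H where
  toLinearMap := B
  counit_comp := hB.2.1
  map_comp_comul := hB.1.symm

lemma convOne_comp :
    (1 : WithConv (H →ₗ[K] H)).ofConv ∘ₗ B = (1 : WithConv (H →ₗ[K] H)).ofConv := by
  rw [LinearMap.convOne_def, ofConv_toConv, LinearMap.comp_assoc, hB.2.1]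

lemma antipode_comp_mul_self : toConv (aS K H ∘ₗ B) * toConv B = 1 := by
  have h := LinearMap.convMul_comp_coalgHom_distrib (toConv (aS K H)) (toConv .id)
    hB.toCoalgHom_s8
  change _ ∘ₗ B = (toConv (aS K H ∘ₗ B) * toConv (.id ∘ₗ B)).ofConv at h
  rw [aS, LinearMap.antipode_mul_id, hB.convOne_comp, LinearMap.id_comp] at h
  exact congrArg toConv h.symm

lemma mul_antipode_comp_s8 : toConv B * toConv (aS K H ∘ₗ B) = 1 := by
  have h := LinearMap.convMul_comp_coalgHom_distrib (toConv .id) (toConv (aS K H))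
    hB.toCoalgHom_s8
  change _ ∘ₗ B = (toConv (.id ∘ₗ B) * toConv (aS K H ∘ₗ B)).ofConv at h
  rw [aS, LinearMap.id_mul_antipode, hB.convOne_comp, LinearMap.id_comp] at h
  exact congrArg toConv h.symm

lemma map_one : B 1 = 1 := by
  have hg : IsGroupLikeElem K (B 1) := IsGroupLikeElem.one.map hB.toCoalgHom_s8
  have hmulB : mulB B (1 ⊗ₜ 1) = 1 := by
    simp [mulB, wrap, conv, aS, Algebra.TensorProduct.one_def, hg.mul_antipode_cancel]
  have h : B 1 * B 1 = B 1 := by rw [hB.2.2, hmulB]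
  exact hg.isUnit.mul_eq_left.mp h

lemma comp_convOne :
    B ∘ₗ (1 : WithConv (H →ₗ[K] H)).ofConv = (1 : WithConv (H →ₗ[K] H)).ofConv := by
  ext x
  simp [Algebra.algebraMap_eq_smul_one, hB.map_one]

lemma mul'_comp_map_self : mul' K H ∘ₗ map B B = B ∘ₗ mulB B :=
  TensorProduct.ext' hB.2.2

lemma toConv_mul_toConv_comp (k : H →ₗ[K] H) :
    toConv B * toConv (B ∘ₗ k) = toConv (B ∘ₗ mulB B ∘ₗ k.lTensor H ∘ₗ Coalgebra.comul) := by
  rw [LinearMap.convMul_def, ofConv_toConv, ofConv_toConv, ← map_comp_lTensor,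
    ← LinearMap.comp_assoc, ← LinearMap.comp_assoc, hB.mul'_comp_map_self]
  simp only [LinearMap.comp_assoc]

theorem antipode_comp (hcc : IsCocomm K H) : aS K H ∘ₗ B = B ∘ₗ SB B := by
  set b := toConv B
  set u := toConv (aS K H ∘ₗ B)
  have hconj : b * (toConv (SB B) * toConv (conv (aS K H ∘ₗ B) .id)) = 1 :=
    calc b * ((u * (toConv (aS K H) * b)) * (u * toConv .id))
        = (b * u) * toConv (aS K H) * (b * u) * toConv .id := by simp only [mul_assoc]
      _ = 1 := by rw [hB.mul_antipode_comp_s8, one_mul, mul_one, aS, LinearMap.antipode_mul_id]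
  have hright : b * toConv (B ∘ₗ SB B) = 1 := by
    rw [hB.toConv_mul_toConv_comp, mulB, wrap_id_comp_lTensor_comp_comul hcc]
    rw [← ofConv_toConv (conv B _), toConv_conv, toConv_conv, hconj, hB.comp_convOne]
  exact congrArg ofConv (left_inv_eq_right_inv hB.antipode_comp_mul_self hright)

end IsRotaBaxter

end

/-- `Im B` is a Hopf subalgebra of `H`. -/
theorem stmt8 (B : H →ₗ[K] H) (hcc : IsCocomm K H) (hB : IsRotaBaxter B) :
    ((1 : H) ∈ Set.range B) ∧
    (∀ x y : H, ∃ z : H, B x * B y = B z) ∧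
    (∀ x : H, ∃ z : H, aS K H (B x) = B z) ∧
    (∀ x : H,
      Coalgebra.comul (R := K) (B x) = TensorProduct.map B B (Coalgebra.comul (R := K) x) ∧
      Coalgebra.comul (R := K) (B x) ∈ LinearMap.range (TensorProduct.map B B)) := by
  refine ⟨⟨1, hB.map_one⟩, fun x y => ⟨mulB B (x ⊗ₜ y), hB.2.2 x y⟩,
    fun x => ⟨SB B x, LinearMap.congr_fun (hB.antipode_comp hcc) x⟩, fun x => ?_⟩
  have hcomul : Coalgebra.comul (R := K) (B x) = map B B (Coalgebra.comul x) :=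
    LinearMap.congr_fun hB.1 x
  exact ⟨hcomul, hcomul ▸ LinearMap.mem_range_self _ _⟩

end
end

section
/- Let A be a cocommutative Hopf algebra over a field of characteristic 0 and let B, B' : A → A be idempotent Hopf algebra endomorphisms (B ∘ B = B, B' ∘ B' = B', both algebra and coalgebra maps) satisfying B(x₁)B'(x₂) = x for all x ∈ A. Then: (a) B and B' are Rota–Baxter operators of weight −1 on A, i.e. B(x)B(y) = B(B(x₁) y S(B(x₂)) x₃) and B'(x)B'(y) = B'(B'(x₁) y S(B'(x₂)) x₃) for all x, y ∈ A, and moreover B(B'(x)) = B'(B(x)) = ε(x)1 for all x ∈ A; (b) B'(x₁)B(x₂) = x for all x ∈ A. -/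
/-!
All computations take place in the convolution monoid of linear endomorphisms of `H`.
A bialgebra endomorphism `T` commutes with the antipode `S`, and `S ∘ T` is its convolution
inverse. If moreover `T` is idempotent, then `T ∘ ((S ∘ T) * id) = (S ∘ T) * T = 1`, and this
makes `T (T x₁ * y * S (T x₂) * x₃)` collapse to `T x * T y`.

From `B * B' = id` one reads off `B' = (S ∘ B) * id` and `B = id * (S ∘ B')`, hence
`B ∘ B' = B' ∘ B = 1 = ε(·) 1`. Finally, cocommutativity makes `E = B' * B` a coalgebra map,
so precomposition with `E` distributes over `*`, and `E = (B * B') ∘ E = (B ∘ E) * (B' ∘ E) =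
B * B' = id`.
-/

open TensorProduct LinearMap

noncomputable section

universe u

variable {K H : Type u} [Field K] [CharZero K] [Ring H] [HopfAlgebra K H]

open HopfAlgebra Bialgebra WithConv

section Convolution

variable {R A C : Type*} [CommSemiring R] [Semiring A] [Algebra R A] [AddCommMonoid C]
  [Module R C] [Coalgebra R C]

lemma convMul_mulLeft_comp_one (f : C →ₗ[R] A) (c : A) :
    toConv f * toConv (mulLeft R c ∘ₗ (1 : WithConv (C →ₗ[R] A)).ofConv)
      = toConv (mulRight R c ∘ₗ f) := by
  ext x
  have hf := congrArg (· x) (mul_one (toConv f))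
  simp only [(Coalgebra.Repr.arbitrary R x).convMul_apply] at hf ⊢
  rw [comp_apply, mulRight_apply, ← hf, Finset.sum_mul]
  refine Finset.sum_congr rfl fun i _ => ?_
  simp [mul_assoc, Algebra.commutes]

end Convolution

namespace CoalgHom

variable {R A C : Type*} [CommSemiring R] [Semiring A] [Bialgebra R A] [AddCommMonoid C]
  [Module R C] [Coalgebra R C] [Coalgebra.IsCocomm R C]

noncomputable def convMul (f g : C →ₗc[R] A) : C →ₗc[R] A where
  toLinearMap := (toConv f.toLinearMap * toConv g.toLinearMap).ofConv
  counit_comp := by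
    rw [← toLinearMap_counitAlgHom, algHom_comp_convMul_distrib]
    simp only [toLinearMap_counitAlgHom, f.counit_comp, g.counit_comp]
    exact congrArg ofConv (mul_one (1 : WithConv (C →ₗ[R] R)))
  map_comp_comul := by
    rw [← toLinearMap_comulAlgHom, algHom_comp_convMul_distrib]
    simp only [toLinearMap_comulAlgHom, ← f.map_comp_comul, ← g.map_comp_comul]
    have hmap := map_convMul_map (f := toConv f.toLinearMap) (h := toConv g.toLinearMap)
      (g := toConv f.toLinearMap) (k := toConv g.toLinearMap)
    have hcomp := convMul_comp_coalgHom_distrib (toConv (map f.toLinearMap f.toLinearMap))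
      (toConv (map g.toLinearMap g.toLinearMap)) (Coalgebra.comulCoalgHom R C)
    rw [hmap] at hcomp
    exact hcomp

end CoalgHom

namespace BialgHom

lemma toLinearMap_comp_convMul {R A B C : Type*} [CommSemiring R] [Semiring A] [Bialgebra R A]
    [Semiring B] [Bialgebra R B] [AddCommMonoid C] [Module R C] [CoalgebraStruct R C]
    (T : A →ₐc[R] B) (f g : WithConv (C →ₗ[R] A)) :
    toConv (T.toLinearMap ∘ₗ (f * g).ofConv)
      = toConv (T.toLinearMap ∘ₗ f.ofConv) * toConv (T.toLinearMap ∘ₗ g.ofConv) :=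
  congrArg toConv (algHom_comp_convMul_distrib (T : A →ₐ[R] B) f g)

section Antipode

variable {R A B : Type*} [CommSemiring R] [Semiring A] [HopfAlgebra R A] [Semiring B]
  [HopfAlgebra R B] (T : A →ₐc[R] B)

lemma antipode_comp_convMul_self :
    toConv (antipode R ∘ₗ T.toLinearMap) * toConv T.toLinearMap = 1 := by
  have h := convMul_comp_coalgHom_distrib (toConv (antipode R)) (toConv LinearMap.id) T.toCoalgHom
  rw [antipode_mul_id, convOne_comp_coalgHom] at h
  exact ofConv_injective h.symm

lemma self_convMul_antipode_comp :
    toConv T.toLinearMap * toConv (antipode R ∘ₗ T.toLinearMap) = 1 := by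
  have h := convMul_comp_coalgHom_distrib (toConv LinearMap.id) (toConv (antipode R)) T.toCoalgHom
  rw [id_mul_antipode, convOne_comp_coalgHom] at h
  exact ofConv_injective h.symm

lemma comp_antipode_convMul_self :
    toConv (T.toLinearMap ∘ₗ antipode R) * toConv T.toLinearMap = 1 := by
  have h := T.toLinearMap_comp_convMul (toConv (antipode R)) (toConv LinearMap.id)
  rw [antipode_mul_id] at h
  exact h.symm.trans (congrArg toConv (algHom_comp_convOne (T : A →ₐ[R] B)))

lemma comp_antipode : T.toLinearMap ∘ₗ antipode R = antipode R ∘ₗ T.toLinearMap :=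
  toConv_injective <|
    left_inv_eq_right_inv T.comp_antipode_convMul_self T.self_convMul_antipode_comp

end Antipode

section Endomorphism

variable {R A : Type*} [CommSemiring R] [Semiring A] [HopfAlgebra R A]

lemma comp_antipode_comp_convMul_id (T : A →ₐc[R] A)
    (hT : T.toLinearMap ∘ₗ T.toLinearMap = T.toLinearMap) :
    T.toLinearMap ∘ₗ (toConv (antipode R ∘ₗ T.toLinearMap) * toConv LinearMap.id).ofConv
      = (1 : WithConv (A →ₗ[R] A)).ofConv := by
  apply toConv_injective
  rw [toLinearMap_comp_convMul, ofConv_toConv, ofConv_toConv, ← LinearMap.comp_assoc,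
    comp_antipode, LinearMap.comp_assoc, hT, LinearMap.comp_id]
  exact T.antipode_comp_convMul_self

lemma comp_id_convMul_antipode_comp (T : A →ₐc[R] A)
    (hT : T.toLinearMap ∘ₗ T.toLinearMap = T.toLinearMap) :
    T.toLinearMap ∘ₗ (toConv LinearMap.id * toConv (antipode R ∘ₗ T.toLinearMap)).ofConv
      = (1 : WithConv (A →ₗ[R] A)).ofConv := by
  apply toConv_injective
  rw [toLinearMap_comp_convMul, ofConv_toConv, ofConv_toConv, ← LinearMap.comp_assoc,
    comp_antipode, LinearMap.comp_assoc, hT, LinearMap.comp_id]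
  exact T.self_convMul_antipode_comp

variable {B B' : A →ₐc[R] A}

lemma eq_antipode_comp_convMul_id_of_convMul_eq_id
    (hpair : toConv B.toLinearMap * toConv B'.toLinearMap = toConv LinearMap.id) :
    toConv B'.toLinearMap = toConv (antipode R ∘ₗ B.toLinearMap) * toConv LinearMap.id := by
  rw [← hpair, ← mul_assoc, antipode_comp_convMul_self, one_mul]

lemma eq_id_convMul_antipode_comp_of_convMul_eq_id
    (hpair : toConv B.toLinearMap * toConv B'.toLinearMap = toConv LinearMap.id) :
    toConv B.toLinearMap = toConv LinearMap.id * toConv (antipode R ∘ₗ B'.toLinearMap) := by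
  rw [← hpair, mul_assoc, self_convMul_antipode_comp, mul_one]

lemma comp_eq_one_of_convMul_eq_id (hB : B.toLinearMap ∘ₗ B.toLinearMap = B.toLinearMap)
    (hpair : toConv B.toLinearMap * toConv B'.toLinearMap = toConv LinearMap.id) :
    toConv (B.toLinearMap ∘ₗ B'.toLinearMap) = 1 := by
  rw [← ofConv_toConv B'.toLinearMap, eq_antipode_comp_convMul_id_of_convMul_eq_id hpair]
  exact congrArg toConv (B.comp_antipode_comp_convMul_id hB)

lemma comp_eq_one_of_convMul_eq_id' (hB' : B'.toLinearMap ∘ₗ B'.toLinearMap = B'.toLinearMap)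
    (hpair : toConv B.toLinearMap * toConv B'.toLinearMap = toConv LinearMap.id) :
    toConv (B'.toLinearMap ∘ₗ B.toLinearMap) = 1 := by
  rw [← ofConv_toConv B.toLinearMap, eq_id_convMul_antipode_comp_of_convMul_eq_id hpair]
  exact congrArg toConv (B'.comp_id_convMul_antipode_comp hB')

lemma convMul_swap_eq_id [Coalgebra.IsCocomm R A]
    (hB : B.toLinearMap ∘ₗ B.toLinearMap = B.toLinearMap)
    (hB' : B'.toLinearMap ∘ₗ B'.toLinearMap = B'.toLinearMap)
    (hpair : toConv B.toLinearMap * toConv B'.toLinearMap = toConv LinearMap.id) :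
    toConv B'.toLinearMap * toConv B.toLinearMap = toConv LinearMap.id := by
  set b := toConv B.toLinearMap
  set b' := toConv B'.toLinearMap
  have hBE : toConv (B.toLinearMap ∘ₗ (b' * b).ofConv) = b := by
    rw [toLinearMap_comp_convMul, ofConv_toConv, ofConv_toConv,
      comp_eq_one_of_convMul_eq_id hB hpair, hB, one_mul]
  have hB'E : toConv (B'.toLinearMap ∘ₗ (b' * b).ofConv) = b' := by
    rw [toLinearMap_comp_convMul, ofConv_toConv, ofConv_toConv,
      comp_eq_one_of_convMul_eq_id' hB' hpair, hB', mul_one]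
  calc b' * b
      = toConv ((b * b').ofConv ∘ₗ (b' * b).ofConv) := by rw [hpair]; rfl
    _ = toConv (B.toLinearMap ∘ₗ (b' * b).ofConv) * toConv (B'.toLinearMap ∘ₗ (b' * b).ofConv) :=
      congrArg toConv <|
        convMul_comp_coalgHom_distrib b b' (CoalgHom.convMul B'.toCoalgHom B.toCoalgHom)
    _ = toConv LinearMap.id := by rw [hBE, hB'E, hpair]

end Endomorphism

end BialgHom

lemma mulB_tmul {k A : Type u} [Field k] [Ring A] [HopfAlgebra k A] (T : A →ₗ[k] A) (x y : A) :
    mulB T (x ⊗ₜ y) = (toConv T * toConv (mulLeft k y ∘ₗ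
      (toConv (antipode k ∘ₗ T) * toConv LinearMap.id).ofConv)) x := by
  rw [(Coalgebra.Repr.arbitrary k x).convMul_apply]
  unfold mulB wrap
  simp only [LinearMap.comp_apply, map_tmul, LinearMap.id_coe, id_eq]
  rw [← (Coalgebra.Repr.arbitrary k x).eq]
  simp only [sum_tmul, map_sum, LinearEquiv.coe_coe, assoc_tmul, map_tmul, comp_apply, comm_tmul,
    id_coe, id_eq, mul'_apply, mulLeft_apply]
  rfl

lemma BialgHom.mul_eq_mulB {k A : Type u} [Field k] [Ring A] [HopfAlgebra k A] (T : A →ₐc[k] A)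
    (hT : T.toLinearMap ∘ₗ T.toLinearMap = T.toLinearMap) (x y : A) :
    T x * T y = T (mulB T.toLinearMap (x ⊗ₜ y)) := by
  have hmulLeft : T.toLinearMap ∘ₗ mulLeft k y = mulLeft k (T y) ∘ₗ T.toLinearMap := by
    ext z; exact map_mul T y z
  have h : T.toLinearMap ∘ₗ (toConv T.toLinearMap * toConv (mulLeft k y ∘ₗ
      (toConv (antipode k ∘ₗ T.toLinearMap) * toConv LinearMap.id).ofConv)).ofConv
      = mulRight k (T y) ∘ₗ T.toLinearMap := by
    apply toConv_injective
    rw [T.toLinearMap_comp_convMul, ofConv_toConv, ofConv_toConv, hT, ← LinearMap.comp_assoc,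
      hmulLeft, LinearMap.comp_assoc, T.comp_antipode_comp_convMul_id hT,
      convMul_mulLeft_comp_one]
  rw [mulB_tmul]
  exact (LinearMap.congr_fun h x).symm

/-- a projection homomorphism pair `(B, B')` consists of Rota–Baxter operators
of weight `-1`, with `B ∘ B' = B' ∘ B = ε(·) 1`, and `B'(x₁) B(x₂) = x`. -/
theorem stmt18 (B B' : H →ₗ[K] H) (hcc : IsCocomm K H)
    (hBmul : ∀ x y : H, B (x * y) = B x * B y) (hBone : B (1 : H) = 1)
    (hBcomul : Coalgebra.comul ∘ₗ B = TensorProduct.map B B ∘ₗ Coalgebra.comul)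
    (hBcounit : Coalgebra.counit ∘ₗ B = Coalgebra.counit)
    (hBidem : B ∘ₗ B = B)
    (hB'mul : ∀ x y : H, B' (x * y) = B' x * B' y) (hB'one : B' (1 : H) = 1)
    (hB'comul : Coalgebra.comul ∘ₗ B' = TensorProduct.map B' B' ∘ₗ Coalgebra.comul)
    (hB'counit : Coalgebra.counit ∘ₗ B' = Coalgebra.counit)
    (hB'idem : B' ∘ₗ B' = B')
    (hpair : ∀ x : H, conv B B' x = x) :
    (∀ x y : H, B x * B y = B (mulB B (x ⊗ₜ[K] y))) ∧
    (∀ x y : H, B' x * B' y = B' (mulB B' (x ⊗ₜ[K] y))) ∧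
    (∀ x : H, B (B' x) = Coalgebra.counit (R := K) x • (1 : H) ∧
      B' (B x) = Coalgebra.counit (R := K) x • (1 : H)) ∧
    (∀ x : H, conv B' B x = x) := by
  have : Coalgebra.IsCocomm K H := ⟨LinearMap.ext hcc⟩
  obtain ⟨T, rfl⟩ : ∃ T : H →ₐc[K] H, T.toLinearMap = B :=
    ⟨{ B with
        map_one' := hBone
        map_mul' := hBmul
        counit_comp := hBcounit
        map_comp_comul := hBcomul.symm }, rfl⟩
  obtain ⟨T', rfl⟩ : ∃ T' : H →ₐc[K] H, T'.toLinearMap = B' :=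
    ⟨{ B' with
        map_one' := hB'one
        map_mul' := hB'mul
        counit_comp := hB'counit
        map_comp_comul := hB'comul.symm }, rfl⟩
  have hconv : toConv T.toLinearMap * toConv T'.toLinearMap = toConv LinearMap.id :=
    WithConv.ext (LinearMap.ext hpair)
  refine ⟨T.mul_eq_mulB hBidem, T'.mul_eq_mulB hB'idem, fun x => ⟨?_, ?_⟩, fun x => ?_⟩
  · simpa [Algebra.algebraMap_eq_smul_one] using
      congr($(BialgHom.comp_eq_one_of_convMul_eq_id hBidem hconv) x)
  · simpa [Algebra.algebraMap_eq_smul_one] using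
      congr($(BialgHom.comp_eq_one_of_convMul_eq_id' hB'idem hconv) x)
  · exact congr($(BialgHom.convMul_swap_eq_id hBidem hB'idem hconv) x)
end
end
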